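/- In the SVM prediction–correction scheme, if the supplementary-variable function is chosen as g(φ) = −M∇F(φ) = −M(Lφ + ∇f(φ)) (the SVM2 choice), then ∂u/∂β(0, 0) = −⟨∇F(φ^n), M∇F(φ^n)⟩; in particular, if M is symmetric positive definite, the sufficient condition ⟨∇F(φ^n), g(φ^n)⟩ ≠ 0 of the implicit-function theorem for β holds if and only if ∇F(φ^n) ≠ 0, i.e., whenever the steady state has not been reached. -/

import Mathlib

open scoped RealInnerProductSpace
open Matrix

noncomputable section

/-- `ℝ^n` with the Euclidean inner product. -/
abbrev Vec (n : ℕ) := EuclideanSpace ℝ (Fin n)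

/-- Action of a matrix on a Euclidean vector. -/
def mv {n : ℕ} (A : Matrix (Fin n) (Fin n) ℝ) (x : Vec n) : Vec n :=
  Matrix.toEuclideanLin A x

/-- Free energy `F(φ) = (1/2)⟨φ, Lφ⟩ + f(φ)`. -/
def freeEnergy {n : ℕ} (L : Matrix (Fin n) (Fin n) ℝ) (f : Vec n → ℝ) (φ : Vec n) : ℝ :=
  (1/2 : ℝ) * ⟪φ, mv L φ⟫ + f φ

/-- Extrapolation `φ̄ = (3φⁿ − φⁿ⁻¹)/2`. -/
def phiBar {n : ℕ} (φm φn : Vec n) : Vec n := (1/2 : ℝ) • ((3 : ℝ) • φn - φm)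

/-- The matrix `(I + (Δt/2) M L)⁻¹`. -/
def svmInv {n : ℕ} (M L : Matrix (Fin n) (Fin n) ℝ) (Δt : ℝ) : Matrix (Fin n) (Fin n) ℝ :=
  (1 + (Δt / 2) • (M * L))⁻¹

/-- Predictor `φ̃(Δt) = (I + (Δt/2)ML)⁻¹ (φⁿ − (Δt/2) M ∇f(φ̄))`. -/
def phiTilde {n : ℕ} (M L : Matrix (Fin n) (Fin n) ℝ) (f : Vec n → ℝ)
    (φm φn : Vec n) (Δt : ℝ) : Vec n :=
  mv (svmInv M L Δt) (φn - (Δt / 2) • mv M (gradient f (phiBar φm φn)))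

/-- Predicted chemical potential `μ̃(Δt) = Lφ̃(Δt) + ∇f(φ̃(Δt))`. -/
def muTilde {n : ℕ} (M L : Matrix (Fin n) (Fin n) ℝ) (f : Vec n → ℝ)
    (φm φn : Vec n) (Δt : ℝ) : Vec n :=
  mv L (phiTilde M L f φm φn Δt) + gradient f (phiTilde M L f φm φn Δt)

/-- Predicted energy `F̃(Δt) = F(φⁿ) − Δt ⟨μ̃, Mμ̃⟩`. -/
def Ftilde {n : ℕ} (M L : Matrix (Fin n) (Fin n) ℝ) (f : Vec n → ℝ)
    (φm φn : Vec n) (Δt : ℝ) : ℝ :=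
  freeEnergy L f φn - Δt * ⟪muTilde M L f φm φn Δt, mv M (muTilde M L f φm φn Δt)⟫

/-- Corrector `φ̂(Δt) = (I + (Δt/2)ML)⁻¹ ((I − (Δt/2)ML)φⁿ − Δt M ∇f(φ̃(Δt)))`. -/
def phiHat {n : ℕ} (M L : Matrix (Fin n) (Fin n) ℝ) (f : Vec n → ℝ)
    (φm φn : Vec n) (Δt : ℝ) : Vec n :=
  mv (svmInv M L Δt)
    (mv (1 - (Δt / 2) • (M * L)) φn - Δt • mv M (gradient f (phiTilde M L f φm φn Δt)))

/-- `φ̌(Δt) = (I + (Δt/2)ML)⁻¹ g(φ̃(Δt))`. -/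
def phiCheck {n : ℕ} (M L : Matrix (Fin n) (Fin n) ℝ) (f : Vec n → ℝ)
    (g : Vec n → Vec n) (φm φn : Vec n) (Δt : ℝ) : Vec n :=
  mv (svmInv M L Δt) (g (phiTilde M L f φm φn Δt))

/-- `u(Δt, β) = F(φ̂(Δt) + β φ̌(Δt)) − F̃(Δt)`. -/
def uFun {n : ℕ} (M L : Matrix (Fin n) (Fin n) ℝ) (f : Vec n → ℝ)
    (g : Vec n → Vec n) (φm φn : Vec n) (Δt β : ℝ) : ℝ :=
  freeEnergy L f (phiHat M L f φm φn Δt + β • phiCheck M L f g φm φn Δt)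
    - Ftilde M L f φm φn Δt



section Aux
variable {n : ℕ}

lemma mv_one (x : Vec n) : mv 1 x = x := by
  simp [mv, Matrix.toEuclideanLin_apply, Matrix.one_mulVec]

def mvCLM (A : Matrix (Fin n) (Fin n) ℝ) : Vec n →L[ℝ] Vec n :=
  LinearMap.toContinuousLinearMap (Matrix.toEuclideanLin A)

lemma mvCLM_apply (A : Matrix (Fin n) (Fin n) ℝ) (x : Vec n) : mvCLM A x = mv A x := rfl

lemma hasGradientAt_freeEnergy (L : Matrix (Fin n) (Fin n) ℝ) (f : Vec n → ℝ)
    (hL : L.IsHermitian) (hf : ContDiff ℝ (⊤ : ℕ∞) f) (a : Vec n) :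
    HasGradientAt (freeEnergy L f) (mv L a + gradient f a) a := by
  have hsym := (Matrix.isHermitian_iff_isSymmetric).mp hL
  have hfd : HasFDerivAt f ((InnerProductSpace.toDual ℝ (Vec n)) (gradient f a)) a :=
    ((hf.differentiable (by simp)).differentiableAt.hasGradientAt).hasFDerivAt
  have hquad : HasFDerivAt (fun φ : Vec n => ⟪φ, mv L φ⟫)
      ((fderivInnerCLM ℝ (a, mvCLM L a)).comp
        ((ContinuousLinearMap.id ℝ (Vec n)).prod (mvCLM L))) a := by
    simpa [mvCLM_apply] using
      (hasFDerivAt_id a).inner ℝ ((mvCLM L).hasFDerivAt (x := a))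
  have hF : HasFDerivAt (freeEnergy L f)
      ((1/2 : ℝ) • ((fderivInnerCLM ℝ (a, mvCLM L a)).comp
        ((ContinuousLinearMap.id ℝ (Vec n)).prod (mvCLM L)))
        + (InnerProductSpace.toDual ℝ (Vec n)) (gradient f a)) a :=
    (hquad.const_mul (1/2 : ℝ)).add hfd
  rw [hasGradientAt_iff_hasFDerivAt]
  refine hF.congr_fderiv ?_
  ext v
  have h1 : ⟪a, mv L v⟫ = ⟪mv L a, v⟫ := (hsym a v).symm
  simp only [ContinuousLinearMap.add_apply, ContinuousLinearMap.smul_apply,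
    ContinuousLinearMap.comp_apply, ContinuousLinearMap.prod_apply,
    ContinuousLinearMap.coe_id', id, fderivInnerCLM_apply,
    InnerProductSpace.toDual_apply_apply, mvCLM_apply, inner_add_left, smul_eq_mul]
  rw [h1, real_inner_comm v (mv L a)]
  ring

lemma gradient_freeEnergy (L : Matrix (Fin n) (Fin n) ℝ) (f : Vec n → ℝ)
    (hL : L.IsHermitian) (hf : ContDiff ℝ (⊤ : ℕ∞) f) (a : Vec n) :
    gradient (freeEnergy L f) a = mv L a + gradient f a :=
  (hasGradientAt_freeEnergy L f hL hf a).gradient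

lemma hasDerivAt_freeEnergy_line (L : Matrix (Fin n) (Fin n) ℝ) (f : Vec n → ℝ)
    (hL : L.IsHermitian) (hf : ContDiff ℝ (⊤ : ℕ∞) f) (a v : Vec n) :
    HasDerivAt (fun β : ℝ => freeEnergy L f (a + β • v))
      ⟪gradient (freeEnergy L f) a, v⟫ 0 := by
  have hline : HasDerivAt (fun t : ℝ => a + t • v) v 0 := by
    simpa using ((hasDerivAt_id (0:ℝ)).smul_const v).const_add a
  have hG : HasFDerivAt (freeEnergy L f)
      ((InnerProductSpace.toDual ℝ (Vec n)) (gradient (freeEnergy L f) a)) a := by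
    have := (hasGradientAt_freeEnergy L f hL hf a).hasFDerivAt
    rwa [← gradient_freeEnergy L f hL hf a] at this
  have h0 : a + (0:ℝ) • v = a := by simp
  have hG' : HasFDerivAt (freeEnergy L f)
      ((InnerProductSpace.toDual ℝ (Vec n)) (gradient (freeEnergy L f) a))
      ((fun t : ℝ => a + t • v) 0) := by simpa [h0] using hG
  have := hG'.comp_hasDerivAt 0 hline
  exact this

lemma inner_mv_posDef {M : Matrix (Fin n) (Fin n) ℝ} (hM : M.PosDef) {x : Vec n}
    (hx : x ≠ 0) : 0 < ⟪x, mv M x⟫ := by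
  have h : (WithLp.equiv 2 (Fin n → ℝ)) x ≠ 0 := by
    intro h0
    exact hx ((WithLp.equiv 2 (Fin n → ℝ)).injective (by simpa using h0))
  have := hM.re_dotProduct_pos h
  simpa [mv, Matrix.toEuclideanLin_apply, PiLp.inner_apply, dotProduct, mul_comm] using this

end Aux

/-- SVM2 choice `g(φ) = −M∇F(φ) = −M(Lφ + ∇f(φ))`:
`∂u/∂β(0,0) = −⟨∇F(φⁿ), M∇F(φⁿ)⟩`; and if `M` is symmetric positive definite, the
condition `⟨∇F(φⁿ), g(φⁿ)⟩ ≠ 0` holds iff `∇F(φⁿ) ≠ 0`. -/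
theorem svm2_partial_u_beta {n : ℕ}
    (M L : Matrix (Fin n) (Fin n) ℝ) (hM : M.PosSemidef) (hL : L.PosDef)
    (f : Vec n → ℝ) (hf : ContDiff ℝ (⊤ : ℕ∞) f)
    (g : Vec n → Vec n)
    (hg : ∀ x : Vec n, g x = -(mv M (mv L x + gradient f x)))
    (φm φn : Vec n) :
    deriv (fun β : ℝ => uFun M L f g φm φn 0 β) 0
      = -⟪gradient (freeEnergy L f) φn, mv M (gradient (freeEnergy L f) φn)⟫ ∧
    (M.PosDef →
      (⟪gradient (freeEnergy L f) φn, g φn⟫ ≠ 0 ↔ gradient (freeEnergy L f) φn ≠ 0)) := by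
  have hLh : L.IsHermitian := hL.isHermitian
  have hgrad := gradient_freeEnergy L f hLh hf φn
  -- simplify the Δt = 0 objects
  have hinv : svmInv M L 0 = 1 := by
    simp [svmInv]
  have htilde : phiTilde M L f φm φn 0 = φn := by
    simp [phiTilde, hinv, mv_one]
  have hhat : phiHat M L f φm φn 0 = φn := by
    simp [phiHat, hinv, mv_one]
  have hcheck : phiCheck M L f g φm φn 0 = g φn := by
    simp [phiCheck, hinv, htilde, mv_one]
  have hFt : Ftilde M L f φm φn 0 = freeEnergy L f φn := by
    simp [Ftilde]
  have hu : (fun β : ℝ => uFun M L f g φm φn 0 β)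
      = fun β : ℝ => freeEnergy L f (φn + β • g φn) - freeEnergy L f φn := by
    funext β
    simp [uFun, hhat, hcheck, hFt]
  have hD : HasDerivAt (fun β : ℝ => uFun M L f g φm φn 0 β)
      ⟪gradient (freeEnergy L f) φn, g φn⟫ 0 := by
    rw [hu]
    simpa using (hasDerivAt_freeEnergy_line L f hLh hf φn (g φn)).sub_const
      (freeEnergy L f φn)
  have hgval : g φn = -(mv M (gradient (freeEnergy L f) φn)) := by
    rw [hg φn, hgrad]
  constructor
  · rw [hD.deriv, hgval, inner_neg_right]
  · intro hMp
    constructor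
    · intro hne h0
      apply hne
      rw [hgval, h0]
      simp [mv, map_zero]
    · intro hne
      rw [hgval, inner_neg_right]
      have := inner_mv_posDef hMp hne
      intro h
      rw [neg_eq_zero] at h
      exact absurd h (ne_of_gt this)


end
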